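/- The distance Laplacian spectrum of $K_{2n,n,n,n}$ (the non-commuting graph of $U_{6n}$) consists of $0$ with multiplicity $1$, $5n$ with multiplicity $3$, $6n$ with multiplicity $3(n-1)$, and $7n$ with multiplicity $2n-1$. In particular, this graph is distance Laplacian integral for all $n$. -/

import Mathlib

open Polynomial

/-- The distance matrix of a graph, with real entries. -/
noncomputable def distMatrix {V : Type*} [Fintype V] (G : SimpleGraph V) : Matrix V V ℝ :=
  Matrix.of fun u v => (G.dist u v : ℝ)

/-- The distance Laplacian matrix `Tr(G) - D(G)`. -/
noncomputable def distLapMatrix {V : Type*} [Fintype V] [DecidableEq V] (G : SimpleGraph V) :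
    Matrix V V ℝ :=
  Matrix.diagonal (fun v => ∑ u, (G.dist v u : ℝ)) - distMatrix G

/-!
Let `N` be the number of vertices of a complete multipartite graph with at least two parts, all
nonempty. Distances are `1` across parts and `2` inside a part, so the distance Laplacian is
`L = diag(N + |V i|) - B - J`, with `B` the all-ones matrix on each part and `J` the all-ones
matrix. Fix a base vertex in each part and replace its unit vector by the indicator vector of its
part. The span of the part indicators is `L`-invariant, `L` acting on it by the quotient
matrix `N • 1 - 1 (|V i|)ᵢᵀ` with characteristic polynomial `X (X - N)^(#parts - 1)`; modulo
that span, `L` acts on the remaining unit vectors as `diag(N + |V i|)`. Hence `L` is block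
upper triangular in the new basis, and its characteristic polynomial is
`X (X - N)^(#parts - 1) ∏ᵢ (X - N - |V i|)^(|V i| - 1)`.
-/

namespace Matrix

variable {n m R : Type*} [Fintype n] [DecidableEq n] [Fintype m] [DecidableEq m] [CommRing R]

theorem charpoly_scalar_sub_vecMulVec [Nonempty n] (c : R) (u v : n → R) :
    (scalar n c - vecMulVec u v).charpoly =
      (X - C c) ^ (Fintype.card n - 1) * (X - C (c - u ⬝ᵥ v)) := by
  have h : scalar n c - vecMulVec u v = vecMulVec (-u) v - scalar n (-c) := by
    rw [neg_vecMulVec, map_neg]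
    abel
  obtain ⟨k, hk⟩ := Nat.exists_eq_succ_of_ne_zero (Fintype.card_ne_zero (α := n))
  rw [h, charpoly_sub_scalar, charpoly_vecMulVec, hk]
  simp only [Nat.succ_sub_one, pow_succ, neg_dotProduct, neg_smul, smul_eq_C_mul,
    sub_neg_eq_add, map_neg, add_comp, mul_comp, pow_comp, X_comp, C_comp, map_sub]
  ring

theorem charpoly_mul_mul_of_mul_eq_one (e : m ≃ n) {P : Matrix n m R} {Q : Matrix m n R}
    (hQP : Q * P = 1) (M : Matrix n n R) : (Q * M * P).charpoly = M.charpoly := by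
  have hPQ : P * Q = 1 := (mul_eq_one_comm_of_equiv e).mp hQP
  rw [Matrix.mul_assoc, charpoly_mul_comm_of_le _ _ (Fintype.card_congr e).ge,
    Fintype.card_congr e, Nat.sub_self, pow_zero, one_mul, Matrix.mul_assoc, hPQ, Matrix.mul_one]

end Matrix

open Matrix SimpleGraph

namespace CompleteMultipartite

section OffBase

variable {ι : Type*} {V : ι → Type*} (o : ∀ i, V i)

abbrev OffBase := {v : Σ i, V i // v.2 ≠ o v.1}

theorem base_ne_offBase (i : ι) (w : OffBase o) : (⟨i, o i⟩ : Σ i, V i) ≠ w.1 :=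
  fun h => w.2 (h ▸ rfl)

def baseSumOffBaseEquiv [∀ i, DecidableEq (V i)] : ι ⊕ OffBase o ≃ Σ i, V i where
  toFun := Sum.elim (fun i => ⟨i, o i⟩) Subtype.val
  invFun v := if h : v.2 = o v.1 then .inl v.1 else .inr ⟨v, h⟩
  left_inv := by
    rintro (i | ⟨v, hv⟩)
    · simp
    · simp [hv]
  right_inv := by
    rintro ⟨i, x⟩
    by_cases h : x = o i
    · subst h
      simp
    · simp [h]

theorem prod_offBase [Fintype ι] [∀ i, Fintype (V i)] [∀ i, DecidableEq (V i)] {M : Type*}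
    [CommMonoid M] (f : ι → M) :
    ∏ w : OffBase o, f w.1.1 = ∏ i, f i ^ (Fintype.card (V i) - 1) := by
  rw [← Finset.prod_subtype (Finset.univ.filter fun v : Σ i, V i => v.2 ≠ o v.1) (by simp)
    fun v => f v.1, Finset.prod_filter, Fintype.prod_sigma]
  refine Finset.prod_congr rfl fun i _ => ?_
  dsimp only
  rw [← Finset.prod_filter, Finset.prod_const, Finset.filter_ne',
    Finset.card_erase_of_mem (Finset.mem_univ _), Finset.card_univ]

end OffBase

/-! The columns of `fromCols (partIndicator V R) (offBaseInclusion R o)` are the indicator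
vectors of the parts and the unit vectors at the non-base vertices;
`fromRows (baseEvaluation R o) (offBaseDifference R o)` is its inverse. -/

section ChangeOfBasis

variable {ι : Type*} {V : ι → Type*} [DecidableEq ι] {R : Type*} [CommRing R]

variable (V R) in
def partIndicator : Matrix (Σ i, V i) ι R :=
  of fun v i => if v.1 = i then 1 else 0

theorem partIndicator_mul_apply [Fintype ι] {m : Type*} (M : Matrix ι m R) (v : Σ i, V i)
    (k : m) : (partIndicator V R * M) v k = M v.1 k := by
  simp [partIndicator, mul_apply]

theorem mul_partIndicator_apply [Fintype ι] [∀ i, Fintype (V i)] {m : Type*}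
    (M : Matrix m (Σ i, V i) R) (v : m) (i : ι) :
    (M * partIndicator V R) v i = ∑ x : V i, M v ⟨i, x⟩ := by
  simp only [partIndicator, mul_apply, of_apply, mul_ite, mul_one, mul_zero, Fintype.sum_sigma]
  rw [Finset.sum_eq_single i (fun j _ hj => by simp [hj]) (by simp)]
  simp

variable [∀ i, DecidableEq (V i)] (o : ∀ i, V i)

variable (R) in
def offBaseInclusion : Matrix (Σ i, V i) (OffBase o) R :=
  of fun v w => if v = w.1 then 1 else 0

variable (R) in
def baseEvaluation : Matrix ι (Σ i, V i) R :=
  of fun i v => if v = ⟨i, o i⟩ then 1 else 0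

variable (R) in
def offBaseDifference : Matrix (OffBase o) (Σ i, V i) R :=
  of fun w v => (if v = w.1 then 1 else 0) - if v = ⟨w.1.1, o w.1.1⟩ then 1 else 0

variable [Fintype ι] [∀ i, Fintype (V i)] {m : Type*}

theorem mul_offBaseInclusion_apply (M : Matrix m (Σ i, V i) R) (v : m) (w : OffBase o) :
    (M * offBaseInclusion R o) v w = M v w.1 := by
  simp [offBaseInclusion, mul_apply]

theorem baseEvaluation_mul_apply (M : Matrix (Σ i, V i) m R) (i : ι) (v : m) :
    (baseEvaluation R o * M) i v = M ⟨i, o i⟩ v := by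
  simp [baseEvaluation, mul_apply]

theorem offBaseDifference_mul_apply (M : Matrix (Σ i, V i) m R) (w : OffBase o) (v : m) :
    (offBaseDifference R o * M) w v = M w.1 v - M ⟨w.1.1, o w.1.1⟩ v := by
  simp [offBaseDifference, mul_apply, sub_mul, Finset.sum_sub_distrib]

theorem baseEvaluation_mul_partIndicator : baseEvaluation R o * partIndicator V R = 1 := by
  ext
  simp [baseEvaluation_mul_apply, partIndicator, one_apply]

theorem baseEvaluation_mul_offBaseInclusion : baseEvaluation R o * offBaseInclusion R o = 0 := by
  ext
  simp [baseEvaluation_mul_apply, offBaseInclusion, base_ne_offBase]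

theorem offBaseDifference_mul_partIndicator : offBaseDifference R o * partIndicator V R = 0 := by
  ext
  simp [offBaseDifference_mul_apply, partIndicator]

theorem offBaseDifference_mul_offBaseInclusion :
    offBaseDifference R o * offBaseInclusion R o = 1 := by
  ext
  simp [offBaseDifference_mul_apply, offBaseInclusion, one_apply, Subtype.ext_iff,
    base_ne_offBase]

theorem fromRows_mul_fromCols_eq_one :
    fromRows (baseEvaluation R o) (offBaseDifference R o) *
      fromCols (partIndicator V R) (offBaseInclusion R o) = 1 := by
  rw [fromRows_mul_fromCols, baseEvaluation_mul_partIndicator,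
    baseEvaluation_mul_offBaseInclusion, offBaseDifference_mul_partIndicator,
    offBaseDifference_mul_offBaseInclusion, fromBlocks_one]

end ChangeOfBasis

section Spectrum

variable {ι : Type*} (V : ι → Type*) [Fintype ι] [DecidableEq ι] [∀ i, Fintype (V i)]
  (R : Type*) [CommRing R]

def quotientDistLap : Matrix ι ι R :=
  scalar ι (Fintype.card (Σ i, V i) : R) -
    vecMulVec (fun _ => 1) fun i => (Fintype.card (V i) : R)

def distLap [∀ i, DecidableEq (V i)] : Matrix (Σ i, V i) (Σ i, V i) R :=
  of fun u v => (if u = v then (Fintype.card (Σ i, V i) + Fintype.card (V u.1) : R) else 0) -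
    (if u.1 = v.1 then 1 else 0) - 1

variable {V R}

theorem charpoly_quotientDistLap [Nonempty ι] :
    (quotientDistLap V R).charpoly =
      X * (X - C (Fintype.card (Σ i, V i) : R)) ^ (Fintype.card ι - 1) := by
  have hsum :
      (fun _ => 1) ⬝ᵥ (fun i => (Fintype.card (V i) : R)) = Fintype.card (Σ i, V i) := by
    simp [dotProduct, Fintype.card_sigma]
  rw [quotientDistLap, charpoly_scalar_sub_vecMulVec, hsum, sub_self, C_0, sub_zero, mul_comm]

variable [∀ i, DecidableEq (V i)]

theorem distLap_mul_partIndicator :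
    distLap V R * partIndicator V R = partIndicator V R * quotientDistLap V R := by
  ext ⟨j, y⟩ i
  rw [mul_partIndicator_apply, partIndicator_mul_apply, quotientDistLap, Matrix.sub_apply,
    scalar_apply, diagonal_apply]
  by_cases h : j = i
  · subst h
    simp [distLap, Finset.sum_sub_distrib, vecMulVec_apply]
  · simp [distLap, vecMulVec_apply, h]

theorem offBaseDifference_mul_distLap_mul_offBaseInclusion (o : ∀ i, V i) :
    offBaseDifference R o * distLap V R * offBaseInclusion R o =
      diagonal fun w => (Fintype.card (Σ i, V i) + Fintype.card (V w.1.1) : R) := by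
  ext w w'
  rw [mul_offBaseInclusion_apply, offBaseDifference_mul_apply]
  simp [distLap, diagonal_apply, base_ne_offBase, Subtype.ext_iff]

theorem charpoly_distLap [Nonempty ι] [∀ i, Nonempty (V i)] :
    (distLap V R).charpoly =
      X * (X - C (Fintype.card (Σ i, V i) : R)) ^ (Fintype.card ι - 1) *
        ∏ i, (X - C (Fintype.card (Σ i, V i) + Fintype.card (V i) : R)) ^
          (Fintype.card (V i) - 1) := by
  let o : ∀ i, V i := fun i => Classical.arbitrary _
  have h₁₁ : baseEvaluation R o * distLap V R * partIndicator V R = quotientDistLap V R := by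
    rw [Matrix.mul_assoc, distLap_mul_partIndicator, ← Matrix.mul_assoc,
      baseEvaluation_mul_partIndicator, Matrix.one_mul]
  have h₂₁ : offBaseDifference R o * distLap V R * partIndicator V R = 0 := by
    rw [Matrix.mul_assoc, distLap_mul_partIndicator, ← Matrix.mul_assoc,
      offBaseDifference_mul_partIndicator, Matrix.zero_mul]
  rw [← charpoly_mul_mul_of_mul_eq_one (baseSumOffBaseEquiv o) (fromRows_mul_fromCols_eq_one o),
    fromRows_mul, fromRows_mul_fromCols, h₂₁, charpoly_fromBlocks_zero₂₁, h₁₁,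
    charpoly_quotientDistLap, offBaseDifference_mul_distLap_mul_offBaseInclusion,
    charpoly_diagonal,
    prod_offBase o fun i => X - C (Fintype.card (Σ i, V i) + Fintype.card (V i) : R)]

end Spectrum

end CompleteMultipartite

section Graph

variable {ι : Type*} {V : ι → Type*} [DecidableEq ι] [∀ i, DecidableEq (V i)] [Nontrivial ι]
  [∀ i, Nonempty (V i)]

theorem SimpleGraph.dist_completeMultipartiteGraph (u v : Σ i, V i) :
    (completeMultipartiteGraph V).dist u v = if u = v then 0 else if u.1 = v.1 then 2 else 1 := by
  split_ifs with huv hpart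
  · rw [huv, SimpleGraph.dist_self]
  · obtain ⟨j, hj⟩ := exists_ne u.1
    have hw :
        ⟨j, Classical.arbitrary _⟩ ∈ (completeMultipartiteGraph V).commonNeighbors u v := by
      rw [mem_commonNeighbors]
      simp [← hpart, Ne.symm hj]
    rw [SimpleGraph.dist, edist_eq_two_iff.mpr ⟨huv, by simpa using hpart, ⟨_, hw⟩⟩]
    rfl
  · exact dist_eq_one_iff_adj.mpr hpart

variable [Fintype ι] [∀ i, Fintype (V i)]

theorem distLapMatrix_completeMultipartiteGraph :
    distLapMatrix (completeMultipartiteGraph V) = CompleteMultipartite.distLap V ℝ := by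
  have hdist (u v : Σ i, V i) : ((completeMultipartiteGraph V).dist u v : ℝ) =
      (if u.1 = v.1 then 1 else 0) + 1 - if u = v then 2 else 0 := by
    rw [dist_completeMultipartiteGraph]
    rcases eq_or_ne u v with rfl | huv
    · norm_num
    · rw [if_neg huv, if_neg huv]
      split_ifs <;> norm_num
  have hpart (i : ι) :
      ∑ v : Σ i, V i, (if i = v.1 then (1 : ℝ) else 0) = Fintype.card (V i) := by
    rw [Fintype.sum_sigma, Finset.sum_eq_single i (fun j _ hj => by simp [Ne.symm hj]) (by simp)]
    simp
  ext u v
  simp only [distLapMatrix, distMatrix, CompleteMultipartite.distLap, hdist, Matrix.sub_apply,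
    diagonal_apply, of_apply, Finset.sum_add_distrib, Finset.sum_sub_distrib, hpart,
    Finset.sum_const, Finset.card_univ, Finset.sum_ite_eq, Finset.mem_univ, if_true, nsmul_eq_mul,
    mul_one]
  split_ifs <;> simp_all <;> ring

theorem charpoly_distLapMatrix_completeMultipartiteGraph :
    (distLapMatrix (completeMultipartiteGraph V)).charpoly =
      X * (X - C (Fintype.card (Σ i, V i) : ℝ)) ^ (Fintype.card ι - 1) *
        ∏ i, (X - C (Fintype.card (Σ i, V i) + Fintype.card (V i) : ℝ)) ^
          (Fintype.card (V i) - 1) := by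
  rw [distLapMatrix_completeMultipartiteGraph, CompleteMultipartite.charpoly_distLap]

theorem exists_int_eq_of_mem_roots_charpoly_distLapMatrix_completeMultipartiteGraph {μ : ℝ}
    (hμ : μ ∈ (distLapMatrix (completeMultipartiteGraph V)).charpoly.roots) :
    ∃ z : ℤ, μ = z := by
  rw [charpoly_distLapMatrix_completeMultipartiteGraph] at hμ
  generalize Fintype.card (Σ i, V i) = N at hμ
  have hroot := (mem_roots'.mp hμ).2
  simp only [IsRoot.def, eval_mul, eval_X, eval_pow, eval_sub, eval_C, eval_prod, mul_eq_zero,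
    pow_eq_zero_iff', sub_eq_zero, Finset.prod_eq_zero_iff, Finset.mem_univ, true_and] at hroot
  rcases hroot with (rfl | ⟨rfl, -⟩) | ⟨i, rfl, -⟩
  · exact ⟨0, by simp⟩
  · exact ⟨N, by simp⟩
  · exact ⟨N + Fintype.card (V i), by push_cast; rfl⟩

end Graph

theorem distLaplacian_spectrum_U6n (n : ℕ) (hn : 1 ≤ n) :
    (distLapMatrix (SimpleGraph.completeMultipartiteGraph
        fun i : Fin 4 => Fin (if i = 0 then 2 * n else n))).charpoly =
      X * (X - C (5 * (n : ℝ))) ^ 3 * (X - C (6 * (n : ℝ))) ^ (3 * (n - 1)) *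
        (X - C (7 * (n : ℝ))) ^ (2 * n - 1) ∧
    ∀ μ ∈ (distLapMatrix (SimpleGraph.completeMultipartiteGraph
        fun i : Fin 4 => Fin (if i = 0 then 2 * n else n))).charpoly.roots,
      ∃ z : ℤ, μ = (z : ℝ) := by
  have : ∀ i : Fin 4, Nonempty (Fin (if i = 0 then 2 * n else n)) :=
    fun i => ⟨⟨0, by split <;> omega⟩⟩
  refine ⟨?_, fun μ hμ =>
    exists_int_eq_of_mem_roots_charpoly_distLapMatrix_completeMultipartiteGraph hμ⟩
  have hN : Fintype.card (Σ i : Fin 4, Fin (if i = 0 then 2 * n else n)) = 5 * n := by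
    simp only [Fintype.card_sigma, Fintype.card_fin, Fin.sum_univ_four, Fin.reduceEq, ↓reduceIte]
    ring
  rw [charpoly_distLapMatrix_completeMultipartiteGraph, hN, Fin.prod_univ_four]
  simp only [Fintype.card_fin, Fin.reduceEq, ↓reduceIte]
  push_cast
  rw [show (5 * n + 2 * n : ℝ) = 7 * n by ring, show (5 * n + n : ℝ) = 6 * n by ring]
  ring
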